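/- For every n ≥ 2, the set of matrices in SO(n) with nonzero trace is dense in SO(n). -/

import Mathlib

/-!
If the trace vanished on a neighbourhood of `A` in `SO(n)`, it would vanish along each curve
`θ ↦ A * R i j θ`, where `R i j θ` rotates the `(i, j)`-plane by `θ`. As
`tr (A * R i j θ) = tr A + (cos θ - 1) (A i i + A j j) + sin θ (A i j - A j i)`, this forces
`A i i + A j j = 0` and `A i j = A j i` for all `i ≠ j`, at `A` and at every nearby point of
`SO(n)`. For `n = 2` there is no symmetric traceless rotation. For `n ≥ 3` the diagonal of every
nearby rotation vanishes; applied to `A * R i j θ`, whose `(i, i)` entry is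
`cos θ * A i i + sin θ * A i j`, this kills the off-diagonal entries as well, so `A = 0`.
-/

open Matrix Real Topology Filter

lemma eq_zero_of_eventually_add_cos_sub_one_mul_add_sin_mul_eq_zero {a c s : ℝ}
    (h : ∀ᶠ θ in 𝓝 0, a + (cos θ - 1) * c + sin θ * s = 0) :
    a = 0 ∧ c = 0 ∧ s = 0 := by
  have ha : a = 0 := by simpa using h.self_of_nhds
  subst ha
  -- at `±θ` the even part `(cos θ - 1) * c` and the odd part `sin θ * s` separate
  have hneg : ∀ᶠ θ in 𝓝 0, 0 + (cos (-θ) - 1) * c + sin (-θ) * s = 0 :=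
    (continuous_neg.tendsto' 0 0 neg_zero).eventually h
  obtain ⟨θ, ⟨hpos, hneg⟩, hθ, hθpi⟩ :=
    ((h.and hneg).filter_mono nhdsWithin_le_nhds |>.and (Ioo_mem_nhdsGT pi_pos)).exists
  rw [cos_neg, sin_neg] at hneg
  have hsin : 0 < sin θ := sin_pos_of_pos_of_lt_pi hθ hθpi
  have hcos : cos θ - 1 ≠ 0 := by
    intro h1
    nlinarith [sin_sq_add_cos_sq θ]
  refine ⟨rfl, ?_, ?_⟩
  · exact (mul_eq_zero.mp (by linarith : (cos θ - 1) * c = 0)).resolve_left hcos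
  · exact (mul_eq_zero.mp (by linarith : sin θ * s = 0)).resolve_left hsin.ne'

namespace Matrix

variable {ι : Type*} [DecidableEq ι]

noncomputable def planeRotation (i j : ι) (θ : ℝ) : Matrix ι ι ℝ :=
  1 + (cos θ - 1) • (single i i 1 + single j j 1) + sin θ • (single j i 1 - single i j 1)

@[simp]
lemma planeRotation_zero (i j : ι) : planeRotation i j 0 = 1 := by
  simp [planeRotation]

lemma transpose_planeRotation (i j : ι) (θ : ℝ) :
    (planeRotation i j θ)ᵀ = planeRotation i j (-θ) := by
  simp only [planeRotation, transpose_add, transpose_smul, transpose_sub, transpose_one,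
    transpose_single, cos_neg, sin_neg]
  module

lemma continuous_planeRotation (i j : ι) : Continuous (planeRotation i j) := by
  unfold planeRotation
  fun_prop

variable [Fintype ι]

lemma planeRotation_add {i j : ι} (hij : i ≠ j) (a b : ℝ) :
    planeRotation i j (a + b) = planeRotation i j a * planeRotation i j b := by
  set P : Matrix ι ι ℝ := single i i 1 + single j j 1
  set Q : Matrix ι ι ℝ := single j i 1 - single i j 1
  have hPP : P * P = P := by
    simp [P, add_mul, mul_add, single_mul_single_of_ne, hij, hij.symm]
  have hPQ : P * Q = Q := by
    simp [P, Q, add_mul, mul_sub, single_mul_single_of_ne, hij, hij.symm]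
  have hQP : Q * P = Q := by
    simp [P, Q, mul_add, sub_mul, single_mul_single_of_ne, hij, hij.symm]
    abel
  have hQQ : Q * Q = -P := by
    simp [P, Q, mul_sub, sub_mul, single_mul_single_of_ne, hij, hij.symm]
    abel
  change 1 + (cos (a + b) - 1) • P + sin (a + b) • Q
      = (1 + (cos a - 1) • P + sin a • Q) * (1 + (cos b - 1) • P + sin b • Q)
  simp only [mul_add, add_mul, one_mul, mul_one, smul_mul_assoc, mul_smul_comm,
    hPP, hPQ, hQP, hQQ, cos_add, sin_add]
  module

lemma planeRotation_mem_specialOrthogonalGroup {i j : ι} (hij : i ≠ j) (θ : ℝ) :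
    planeRotation i j θ ∈ specialOrthogonalGroup ι ℝ := by
  have hinv : planeRotation i j θ * (planeRotation i j θ)ᵀ = 1 := by
    rw [transpose_planeRotation, ← planeRotation_add hij, add_neg_cancel, planeRotation_zero]
  have hsq : (planeRotation i j θ).det ^ 2 = 1 := by
    simpa [sq] using congrArg det hinv
  -- the determinant is a square, `det (R (θ/2)) ^ 2`, hence it is not `-1`
  have hnonneg : 0 ≤ (planeRotation i j θ).det := by
    rw [← add_halves θ, planeRotation_add hij, det_mul]
    exact mul_self_nonneg _
  exact ⟨(mem_orthogonalGroup_iff ι ℝ).mpr hinv,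
    (pow_eq_one_iff_of_nonneg hnonneg two_ne_zero).mp hsq⟩

lemma trace_mul_planeRotation (A : Matrix ι ι ℝ) (i j : ι) (θ : ℝ) :
    (A * planeRotation i j θ).trace
      = A.trace + (cos θ - 1) * (A i i + A j j) + sin θ * (A i j - A j i) := by
  simp [planeRotation, mul_add, mul_sub, trace_mul_single]
  ring

lemma mul_planeRotation_apply_left {i j : ι} (hij : i ≠ j) (A : Matrix ι ι ℝ) (θ : ℝ)
    (a : ι) :
    (A * planeRotation i j θ) a i = cos θ * A a i + sin θ * A a j := by
  simp [planeRotation, mul_add, mul_sub, mul_single_apply_of_ne, hij]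
  ring

variable {A : Matrix ι ι ℝ}

lemma eventually_mul_planeRotation {P : Matrix ι ι ℝ → Prop}
    (hA : A ∈ specialOrthogonalGroup ι ℝ)
    (hP : ∀ᶠ X in 𝓝 A, X ∈ specialOrthogonalGroup ι ℝ → P X)
    {i j : ι} (hij : i ≠ j) :
    ∀ᶠ θ in 𝓝 0, P (A * planeRotation i j θ) := by
  have hlim : Tendsto (fun θ ↦ A * planeRotation i j θ) (𝓝 0) (𝓝 A) :=
    (continuous_const.matrix_mul (continuous_planeRotation i j)).tendsto' 0 A
      (by rw [planeRotation_zero, mul_one])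
  exact (hlim.eventually hP).mono fun θ h ↦
    h (mul_mem hA (planeRotation_mem_specialOrthogonalGroup hij θ))

lemma diag_add_diag_eq_zero_and_symm_of_eventually_trace_eq_zero
    (hA : A ∈ specialOrthogonalGroup ι ℝ)
    (hvan : ∀ᶠ X in 𝓝 A, X ∈ specialOrthogonalGroup ι ℝ → X.trace = 0)
    {i j : ι} (hij : i ≠ j) :
    A i i + A j j = 0 ∧ A i j = A j i := by
  obtain ⟨-, hdiag, hskew⟩ := eq_zero_of_eventually_add_cos_sub_one_mul_add_sin_mul_eq_zero <|
    (eventually_mul_planeRotation hA hvan hij).mono fun θ h ↦ by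
      rwa [trace_mul_planeRotation] at h
  exact ⟨hdiag, sub_eq_zero.mp hskew⟩

lemma diag_eq_zero_of_diag_add_diag_eq_zero (hcard : 2 < Fintype.card ι)
    (h : ∀ i j, i ≠ j → A i i + A j j = 0) (k : ι) : A k k = 0 := by
  have hcard' : 1 < (Finset.univ.erase k).card := by
    rw [Finset.card_erase_of_mem (Finset.mem_univ k), Finset.card_univ]
    omega
  obtain ⟨a, b, ha, hb, hab⟩ := Finset.one_lt_card_iff.mp hcard'
  have hak := Finset.ne_of_mem_erase ha
  have hbk := Finset.ne_of_mem_erase hb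
  linarith [h k a hak.symm, h k b hbk.symm, h a b hab]

lemma not_eventually_trace_eq_zero_of_two_lt_card (hcard : 2 < Fintype.card ι)
    (hA : A ∈ specialOrthogonalGroup ι ℝ) :
    ¬ ∀ᶠ X in 𝓝 A, X ∈ specialOrthogonalGroup ι ℝ → X.trace = 0 := by
  intro hvan
  have hdiag : ∀ᶠ X in 𝓝 A, X ∈ specialOrthogonalGroup ι ℝ → ∀ k, X k k = 0 :=
    hvan.eventually_nhds.mono fun X hX hXmem ↦ diag_eq_zero_of_diag_add_diag_eq_zero hcard
      fun i j hij ↦ (diag_add_diag_eq_zero_and_symm_of_eventually_trace_eq_zero hXmem hX hij).1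
  have hzero : A = 0 := by
    ext i j
    rcases eq_or_ne i j with rfl | hij
    · exact hdiag.self_of_nhds hA i
    · obtain ⟨-, -, hoff⟩ := eq_zero_of_eventually_add_cos_sub_one_mul_add_sin_mul_eq_zero
        (a := A i i) (c := A i i) (s := A i j) <|
        (eventually_mul_planeRotation hA hdiag hij).mono fun θ h ↦ by
          rw [← h i, mul_planeRotation_apply_left hij]
          ring
      exact hoff
  have : Nonempty ι := Fintype.card_pos_iff.mp (by omega)
  simpa [hzero] using hA.2

lemma not_eventually_trace_eq_zero_fin_two {A : Matrix (Fin 2) (Fin 2) ℝ}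
    (hA : A ∈ specialOrthogonalGroup (Fin 2) ℝ) :
    ¬ ∀ᶠ X in 𝓝 A, X ∈ specialOrthogonalGroup (Fin 2) ℝ → X.trace = 0 := by
  intro hvan
  obtain ⟨htr, hsymm⟩ :=
    diag_add_diag_eq_zero_and_symm_of_eventually_trace_eq_zero hA hvan zero_ne_one
  obtain ⟨h00, h01, hnorm⟩ := mem_specialOrthogonalGroup_fin_two_iff.mp hA
  nlinarith

end Matrix

/-- For `n ≥ 2`, matrices with nonzero trace are dense in `SO(n)`. -/
theorem nonzero_trace_dense_in_so (n : ℕ) (hn : 2 ≤ n) :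
    (Matrix.specialOrthogonalGroup (Fin n) ℝ : Set (Matrix (Fin n) (Fin n) ℝ)) ⊆
      closure {X | X ∈ Matrix.specialOrthogonalGroup (Fin n) ℝ ∧ X.trace ≠ 0} := by
  intro A hA
  by_contra hcl
  have hvan : ∀ᶠ X in 𝓝 A, X ∈ specialOrthogonalGroup (Fin n) ℝ → X.trace = 0 := by
    simpa [mem_closure_iff_frequently, not_frequently] using hcl
  rcases hn.eq_or_lt with rfl | h3
  · exact not_eventually_trace_eq_zero_fin_two hA hvan
  · exact not_eventually_trace_eq_zero_of_two_lt_card (by simpa using h3) hA hvan
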